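/- arXiv:2502.11421 — 4 statements merged into one kernel-verified Lean document; each statement's English description precedes it below -/
import Mathlib

section
/- If a finite graph G is connected, asymmetric (its only automorphism is the identity), d-regular, non-bipartite, and triangle-free, then its complement is rigid (its only endomorphism is the identity) and is (n-d-1)-regular, where n is the number of vertices of G. -/
/-!
Some power `g = f ^ m` of an endomorphism `f` of `Gᶜ` is idempotent, i.e. a retraction. A vertex
moved by `g` is `G`-adjacent to its image, and triangle-freeness makes `g` injective on the set `A`
of moved vertices and forces every `G`-neighbour of a vertex of `g(A)` to lie in `A`. Double
counting the edges between `A` and `g(A)` in the `d`-regular graph `G` then shows that every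
neighbour of a vertex of `A` lies in `g(A)`, so by connectivity `G` would be bipartite with parts
`A` and `g(A)` unless `A` is empty. Hence `f ^ m = 1`, so `f` is an automorphism of `Gᶜ`, hence of
`G`, hence the identity.
-/

open Finset

theorem exists_isIdempotentElem_pow {M : Type*} [Monoid M] [Finite M] (x : M) :
    ∃ m, 0 < m ∧ IsIdempotentElem (x ^ m) := by
  obtain ⟨a, b, hne, heq⟩ := Finite.exists_ne_map_eq_of_infinite (x ^ · : ℕ → M)
  wlog hab : a < b generalizing a b
  · exact this b a hne.symm heq.symm (hne.lt_or_gt.resolve_left hab)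
  obtain ⟨k, rfl⟩ := Nat.exists_eq_add_of_lt hab
  -- From `x ^ a` on the powers are periodic with period `k + 1`; take a multiple of it above `a`.
  have hper : ∀ j, x ^ (a + j * (k + 1)) = x ^ a := by
    intro j
    induction j with
    | zero => simp
    | succ j ih =>
      rw [add_mul, one_mul, ← add_assoc, pow_add, ih, ← pow_add]
      exact heq.symm
  obtain ⟨c, hc⟩ : ∃ c, (a + 1) * (k + 1) = a + c :=
    ⟨_, (Nat.add_sub_of_le (by nlinarith)).symm⟩
  refine ⟨(a + 1) * (k + 1), by positivity, ?_⟩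
  rw [IsIdempotentElem, ← pow_add, show (a + 1) * (k + 1) + (a + 1) * (k + 1)
    = a + (a + 1) * (k + 1) + c by omega, pow_add, hper, ← pow_add, ← hc]

namespace SimpleGraph

variable {V W : Type*} {G : SimpleGraph V} {H : SimpleGraph W}

theorem ncard_neighborSet_eq_degree (v : V) [Fintype (G.neighborSet v)] :
    (G.neighborSet v).ncard = G.degree v :=
  Set.ncard_eq_toFinset_card' _

theorem Preconnected.mem_of_neighborSet_subset (hG : G.Preconnected) {s : Set V}
    (hs : ∀ v ∈ s, G.neighborSet v ⊆ s) {u : V} (hu : u ∈ s) (v : V) : v ∈ s := by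
  obtain ⟨p⟩ := hG u v
  induction p with
  | nil => exact hu
  | cons h _ ih => exact ih (hs _ hu h)

theorem Preconnected.isBipartiteWith (hG : G.Preconnected) {s t : Set V} (hst : Disjoint s t)
    (hs : ∀ v ∈ s, G.neighborSet v ⊆ t) (ht : ∀ v ∈ t, G.neighborSet v ⊆ s) {u : V}
    (hu : u ∈ s) : G.IsBipartiteWith s t where
  disjoint := hst
  mem_of_adj v w hvw := by
    have hcover := hG.mem_of_neighborSet_subset (s := s ∪ t) (by
      rintro x (hx | hx)
      exacts [(hs x hx).trans Set.subset_union_right, (ht x hx).trans Set.subset_union_left])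
      (Or.inl hu)
    rcases hcover v with hv | hv
    exacts [Or.inl ⟨hv, hs v hv hvw⟩, Or.inr ⟨hv, ht v hv hvw⟩]

theorem IsRegularOfDegree.neighborFinset_subset_of_card_le [Fintype V] [DecidableRel G.Adj]
    {d : ℕ} (hreg : G.IsRegularOfDegree d) {s t : Finset V}
    (hs : ∀ v ∈ s, G.neighborFinset v ⊆ t) (hcard : #t ≤ #s) :
    ∀ w ∈ t, G.neighborFinset w ⊆ s := by
  have hbelow_sub : ∀ w, s.bipartiteBelow G.Adj w ⊆ G.neighborFinset w := fun w v hv => by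
    simpa [bipartiteBelow, G.adj_comm] using (mem_filter.1 hv).2
  have hbelow : ∀ w ∈ t, #(s.bipartiteBelow G.Adj w) ≤ d := fun w _ =>
    hreg w ▸ card_le_card (hbelow_sub w)
  have habove : ∀ v ∈ s, #(t.bipartiteAbove G.Adj v) = d := fun v hv => by
    rw [← hreg v, ← card_neighborFinset_eq_degree, bipartiteAbove]
    congr 1
    ext w
    simpa using fun h => hs v hv ((G.mem_neighborFinset v w).2 h)
  have hsum : ∑ w ∈ t, #(s.bipartiteBelow G.Adj w) = ∑ w ∈ t, d := by
    refine le_antisymm (sum_le_sum hbelow) ?_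
    calc ∑ w ∈ t, d = #t * d := by rw [sum_const, smul_eq_mul]
      _ ≤ #s * d := Nat.mul_le_mul_right d hcard
      _ = ∑ v ∈ s, #(t.bipartiteAbove G.Adj v) := by
        rw [sum_congr rfl habove, sum_const, smul_eq_mul]
      _ = _ := sum_card_bipartiteAbove_eq_sum_card_bipartiteBelow _
  intro w hw
  have hcard_eq : #(G.neighborFinset w) ≤ #(s.bipartiteBelow G.Adj w) := by
    rw [card_neighborFinset_eq_degree, hreg w, (sum_eq_sum_iff_of_le hbelow).1 hsum w hw]
  rw [← eq_of_subset_of_card_le (hbelow_sub w) hcard_eq]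
  exact filter_subset _ _

theorem Hom.adj_of_adj_map_compl (f : Gᶜ →g Hᶜ) {a b : V} (h : H.Adj (f a) (f b)) :
    G.Adj a b := by
  by_contra hab
  have hne : a ≠ b := fun hab' => H.ne_of_adj h (congrArg f hab')
  exact ((H.compl_adj _ _).1 (f.map_adj ((G.compl_adj a b).2 ⟨hne, hab⟩))).2 h

def Iso.ofComplHoms (f : Gᶜ →g Hᶜ) (f' : Hᶜ →g Gᶜ) (hl : Function.LeftInverse f' f)
    (hr : Function.RightInverse f' f) : G ≃g H where
  toFun := f
  invFun := f'
  left_inv := hl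
  right_inv := hr
  map_rel_iff' {a b} := ⟨f.adj_of_adj_map_compl, fun h =>
    f'.adj_of_adj_map_compl (a := f a) (b := f b) (by rwa [hl a, hl b])⟩

theorem Hom.not_adj_apply_of_isIdempotentElem {g : G →g G} (hg : IsIdempotentElem g) (v : V) :
    ¬G.Adj v (g v) := by
  intro h
  have hgg : g (g v) = g v := DFunLike.congr_fun hg v
  exact G.irrefl (hgg ▸ g.map_adj h)

theorem adj_apply_of_isIdempotentElem_compl {g : Gᶜ →g Gᶜ} (hg : IsIdempotentElem g) {v : V}
    (hv : g v ≠ v) : G.Adj v (g v) := by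
  by_contra h
  exact g.not_adj_apply_of_isIdempotentElem hg v ((G.compl_adj _ _).2 ⟨hv.symm, h⟩)

theorem not_adj_apply_of_isIdempotentElem_compl {g : Gᶜ →g Gᶜ} (hg : IsIdempotentElem g)
    (htri : G.CliqueFree 3) {v x : V} (hv : g v ≠ v) (hx : g x = x) : ¬G.Adj x (g v) := by
  classical
  intro hxgv
  have hxv : G.Adj x v := g.adj_of_adj_map_compl (by rwa [hx])
  exact htri {x, v, g v}
    (is3Clique_triple_iff.2 ⟨hxv, hxgv, adj_apply_of_isIdempotentElem_compl hg hv⟩)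

theorem injOn_of_isIdempotentElem_compl {g : Gᶜ →g Gᶜ} (hg : IsIdempotentElem g)
    (htri : G.CliqueFree 3) : Set.InjOn g {v | g v ≠ v} := by
  classical
  intro a ha b hb hab
  by_contra hne
  by_cases hadj : G.Adj a b
  · refine htri {a, b, g a}
      (is3Clique_triple_iff.2 ⟨hadj, adj_apply_of_isIdempotentElem_compl hg ha, ?_⟩)
    exact hab ▸ adj_apply_of_isIdempotentElem_compl hg hb
  · exact (g.map_adj ((G.compl_adj a b).2 ⟨hne, hadj⟩)).ne hab

theorem Hom.eq_one_of_isIdempotentElem_compl [Fintype V] [DecidableRel G.Adj] {d : ℕ}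
    (hG : G.Preconnected) (hreg : G.IsRegularOfDegree d) (hbip : ¬G.IsBipartite)
    (htri : G.CliqueFree 3) {g : Gᶜ →g Gᶜ} (hg : IsIdempotentElem g) : g = 1 := by
  classical
  by_contra hne
  obtain ⟨u, hu⟩ : ∃ u, g u ≠ u := by
    by_contra! h
    exact hne (RelHom.ext h)
  set A := univ.filter fun v => g v ≠ v
  have hmemA : ∀ v, v ∈ A ↔ g v ≠ v := by simp [A]
  have himage_fixed : ∀ w ∈ A.image g, g w = w := by
    simp only [mem_image]
    rintro _ ⟨a, -, rfl⟩
    exact DFunLike.congr_fun hg a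
  have himage_nbr : ∀ w ∈ A.image g, G.neighborFinset w ⊆ A := by
    simp only [mem_image]
    rintro _ ⟨a, ha, rfl⟩ x hx
    rw [hmemA]
    intro hxfix
    exact not_adj_apply_of_isIdempotentElem_compl hg htri ((hmemA a).1 ha) hxfix
      ((G.mem_neighborFinset _ _).1 hx).symm
  have hcard : #A ≤ #(A.image g) := (card_image_of_injOn fun a ha b hb =>
    injOn_of_isIdempotentElem_compl hg htri ((hmemA a).1 ha) ((hmemA b).1 hb)).ge
  have hA_nbr := hreg.neighborFinset_subset_of_card_le himage_nbr hcard
  refine hbip (IsBipartiteWith.isBipartite (hG.isBipartiteWith (s := A) (t := A.image g)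
    ?_ (fun v hv => Set.toFinset_subset.1 (hA_nbr v hv))
    (fun v hv => Set.toFinset_subset.1 (himage_nbr v hv)) ((hmemA u).2 hu)))
  exact Finset.disjoint_coe.2
    (Finset.disjoint_left.2 fun _ hv hv' => (hmemA _).1 hv (himage_fixed _ hv'))

end SimpleGraph

open SimpleGraph in
/-- If a finite graph `G` is connected, asymmetric, `d`-regular, non-bipartite and
triangle-free, then its complement is rigid and `(n - d - 1)`-regular. -/
theorem complement_rigid {V : Type} [Fintype V] (G : SimpleGraph V) (d : ℕ)
    (hconn : G.Connected)
    (hasym : ∀ e : G ≃g G, ∀ v, e v = v)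
    (hreg : ∀ v, (G.neighborSet v).ncard = d)
    (hnonbip : ¬ G.Colorable 2)
    (htrifree : G.CliqueFree 3) :
    (∀ f : Gᶜ →g Gᶜ, ∀ v, f v = v) ∧
    (∀ v, (Gᶜ.neighborSet v).ncard = Fintype.card V - d - 1) := by
  classical
  have hdeg : G.IsRegularOfDegree d := fun v => G.ncard_neighborSet_eq_degree v ▸ hreg v
  refine ⟨fun f => ?_, fun v => ?_⟩
  · obtain ⟨m, hm, hidem⟩ := exists_isIdempotentElem_pow f
    have hfm : f ^ m = 1 :=
      Hom.eq_one_of_isIdempotentElem_compl hconn.preconnected hdeg hnonbip htrifree hidem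
    have hleft : f ^ (m - 1) * f = 1 := by rw [← pow_succ, Nat.sub_add_cancel hm, hfm]
    have hright : f * f ^ (m - 1) = 1 := by rw [← pow_succ', Nat.sub_add_cancel hm, hfm]
    exact hasym (Iso.ofComplHoms f (f ^ (m - 1)) (DFunLike.congr_fun hleft)
      (DFunLike.congr_fun hright))
  · rw [ncard_neighborSet_eq_degree, hdeg.compl v, Nat.sub_right_comm]
end

section
/- Let f be a planar graph drawn with f faces, e edges, n vertices and n₂ vertices of degree 2, where all vertices have degree 2 or 3, every bounded face has g boundary vertices, and the subgraph is bounded by a cycle C of length |C| ≤ g with g ≥ 7. If 3n - n₂ = (f-1)g + |C| = 2e, then by Euler's formula f ≤ 2. -/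
/-! Eliminating `n` and `e` from Euler's formula with the two double-counting identities leaves
`(f - 1)(g - 6) + 6 + c = 2 n₂`. Since `n₂ ≤ c ≤ g`, this gives `(f - 1)(g - 6) ≤ g - 6`,
and `g - 6 > 0` forces `f - 1 ≤ 1`. -/

/-- `k` stands for `f - 1`, the number of bounded faces. -/
theorem euler_double_count_identity {k e n n₂ c g : ℕ} (heuler : n + (k + 1) = e + 2)
    (hcount : 3 * n = k * g + c + n₂) (hdeg : 2 * e + n₂ = 3 * n) :
    k * g + c + 6 = 2 * n₂ + 6 * k := by
  linarith

theorem le_one_of_mul_add_le {k g : ℕ} (hg : 7 ≤ g) (h : k * g + 6 ≤ g + 6 * k) : k ≤ 1 := by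
  by_contra! hk
  nlinarith

theorem euler_face_bound_general (f e n n₂ c g : ℕ) (hg : 7 ≤ g) (hc : c ≤ g) (hn₂ : n₂ ≤ c)
    (heuler : n + f = e + 2)
    (hcount : 3 * n = (f - 1) * g + c + n₂)
    (hdeg : 2 * e + n₂ = 3 * n) :
    f ≤ 2 := by
  obtain _ | k := f
  · exact Nat.zero_le 2
  rw [Nat.add_sub_cancel] at hcount
  have hid := euler_double_count_identity heuler hcount hdeg
  have hk : k ≤ 1 := le_one_of_mul_add_le hg (by omega)
  omega

/-- The counting argument of Observation 3: with all degrees 2 or 3 (the `n₂` degree-2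
vertices lying on the bounding cycle `C` of length `c ≤ g`), every bounded face having
`g ≥ 7` vertices, the double-counting identities `3n - n₂ = (f-1)g + c = 2e` together
with Euler's formula `n - e + f = 2` force `f ≤ 2`. -/
theorem euler_face_bound (f e n n₂ c g : ℕ) (hg : 7 ≤ g) (hc : c ≤ g) (hn₂ : n₂ ≤ c)
    (hf : 1 ≤ f)
    (heuler : n + f = e + 2)
    (hcount : 3 * n = (f - 1) * g + c + n₂)
    (hdeg : 2 * e + n₂ = 3 * n) :
    f ≤ 2 :=
  euler_face_bound_general f e n n₂ c g hg hc hn₂ heuler hcount hdeg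
end

section
/- Every finite monoid M is isomorphic to the endomorphism monoid of a finite binary relational system in which every vertex has the same total degree (sum of indegrees and outdegrees over all relations). -/
/-!
Left multiplications are exactly the self-maps of `M` preserving every relation `a → a * m` of
the right Cayley graph. To balance degrees, `M` is extended by tags `t₀ < ⋯ < t_T`, related by
their strict order, and a sink `ω`. An element `a` gets edges to `ω` and to the first
`|M|² - #{(b, m) | b * m = a}` tags, compensating its in-degree in the Cayley relations; a unit
test relation joins units to all tags and non-units to `ω` and all tags but the last. A unit `c`
then acts as the identity on the tags and a non-unit collapses them onto `ω`; the strict order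
forces every endomorphism to do one of the two, and the unit test forces the choice to match `c`.
Finally every relation is doubled and loops are added to fill all degrees up to a common value;
the loops are preserved because collapsing a tag onto `ω` never raises its degree.
-/

namespace RelSystem

open Finset

variable {V W ι κ : Type*}

noncomputable def relDegree (r : V → V → Prop) (v : V) : ℕ := {w | r v w}.ncard + {w | r w v}.ncard

noncomputable def totalDegree [Fintype ι] (R : ι → V → V → Prop) (v : V) : ℕ :=
  ∑ i, relDegree (R i) v

def Preserves (R : ι → V → V → Prop) (F : V → V) : Prop := ∀ i a b, R i a b → R i (F a) (F b)

theorem totalDegree_sumElim [Fintype ι] [Fintype κ] (R : ι → V → V → Prop)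
    (S : κ → V → V → Prop) (v : V) :
    totalDegree (Sum.elim R S) v = totalDegree R v + totalDegree S v :=
  Fintype.sum_sum_type _

theorem preserves_sumElim {R : ι → V → V → Prop} {S : κ → V → V → Prop} {F : V → V} :
    Preserves (Sum.elim R S) F ↔ Preserves R F ∧ Preserves S F :=
  ⟨fun h => ⟨fun i => h (.inl i), fun i => h (.inr i)⟩, fun h => Sum.rec h.1 h.2⟩

theorem relDegree_loops (p : V → Prop) [DecidablePred p] (v : V) :
    relDegree (fun x y => x = y ∧ p x) v = if p v then 2 else 0 := by
  have hout : {w | v = w ∧ p v}.ncard = if p v then 1 else 0 := by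
    split_ifs with hv
    · exact Set.ncard_eq_one.2 ⟨v, by ext w; simp [hv, eq_comm]⟩
    · simp [hv]
  have hin : {w | w = v ∧ p w}.ncard = {w | v = w ∧ p v}.ncard := by
    congr 1; ext w; constructor <;> rintro ⟨rfl, h⟩ <;> exact ⟨rfl, h⟩
  rw [relDegree, hin, hout]
  split_ifs <;> rfl

def loopPad (b : V → ℕ) (e : ℕ) : Fin e → V → V → Prop := fun k v w => v = w ∧ (k : ℕ) < e - b v

theorem totalDegree_loopPad (b : V → ℕ) (e : ℕ) (v : V) :
    totalDegree (loopPad b e) v = 2 * (e - b v) := by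
  classical
  change ∑ k : Fin e, relDegree (fun x y => x = y ∧ (k : ℕ) < e - b x) v = _
  simp only [relDegree_loops]
  rw [← Finset.sum_filter, Finset.sum_const, Fin.card_filter_val_lt, smul_eq_mul,
    min_eq_right (Nat.sub_le e (b v)), mul_comm]

theorem preserves_loopPad_iff {b : V → ℕ} {e : ℕ} {F : V → V} :
    Preserves (loopPad b e) F ↔ ∀ v, e - b v ≤ e - b (F v) := by
  refine ⟨fun hF v => ?_, fun hF k v w ⟨hvw, hk⟩ => ⟨congrArg F hvw, hk.trans_le (hF v)⟩⟩
  by_contra! hlt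
  exact (hF ⟨e - b (F v), hlt.trans_le (Nat.sub_le _ _)⟩ v v ⟨rfl, hlt⟩).2.false

-- Doubling makes every deficit `2 * (e - totalDegree R v)` even, so loops can fill it.
noncomputable def regularize [Fintype ι] (R : ι → V → V → Prop) (e : ℕ) :
    (ι ⊕ ι) ⊕ Fin e → V → V → Prop :=
  Sum.elim (Sum.elim R R) (loopPad (totalDegree R) e)

theorem totalDegree_regularize [Fintype ι] {R : ι → V → V → Prop} {e : ℕ}
    (hR : ∀ v, totalDegree R v ≤ e) (v : V) : totalDegree (regularize R e) v = 2 * e := by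
  rw [regularize, totalDegree_sumElim, totalDegree_sumElim, totalDegree_loopPad]
  have := hR v
  omega

theorem preserves_regularize_iff [Fintype ι] {R : ι → V → V → Prop} {e : ℕ} {F : V → V} :
    Preserves (regularize R e) F ↔
      Preserves R F ∧ ∀ v, e - totalDegree R v ≤ e - totalDegree R (F v) := by
  rw [regularize, preserves_sumElim, preserves_sumElim, preserves_loopPad_iff, and_self]

theorem relDegree_comap (e : V ≃ W) (r : V → V → Prop) (w : W) :
    relDegree (fun x y => r (e.symm x) (e.symm y)) w = relDegree r (e.symm w) := by
  have h (s : Set V) : (e.symm ⁻¹' s).ncard = s.ncard := by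
    rw [← Equiv.image_symm_eq_preimage, Equiv.symm_symm, Set.ncard_image_of_injective _ e.injective]
  exact congr_arg₂ (· + ·) (h {x | r (e.symm w) x}) (h {x | r x (e.symm w)})

theorem preserves_comap_iff (e : V ≃ W) (eι : ι ≃ κ) (R : ι → V → V → Prop) (F : V → V) :
    Preserves (fun i x y => R (eι.symm i) (e.symm x) (e.symm y)) (e.arrowCongr e F) ↔
      Preserves R F := by
  simp only [Preserves, Equiv.arrowCongr_apply, Function.comp_apply, Equiv.symm_apply_apply]
  refine ⟨fun h i a b hab => ?_, fun h i a b hab => h _ _ _ hab⟩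
  simpa using h (eι i) (e a) (e b) (by simpa using hab)

theorem exists_fin_system_of_range_eq {M : Type} [Monoid M] [Fintype V] [Fintype ι]
    (R : ι → V → V → Prop) (d : ℕ) (hdeg : ∀ v, totalDegree R v = d)
    (φ : M →* Function.End V) (hφ : Function.Injective φ)
    (hrange : ∀ F, Preserves R F ↔ F ∈ Set.range φ) :
    ∃ (n k : ℕ) (A : Fin k → Fin n → Fin n → Prop) (d : ℕ),
      (∀ v : Fin n,
        (∑ i : Fin k, ({w | A i v w}.ncard + {w | A i w v}.ncard)) = d) ∧
      ∃ e : M ≃ {F : Fin n → Fin n // ∀ i a b, A i a b → A i (F a) (F b)},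
        (e 1).1 = id ∧ ∀ m m' : M, (e (m * m')).1 = (e m).1 ∘ (e m').1 := by
  let eV := Fintype.equivFin V
  let eι := Fintype.equivFin ι
  let A : Fin _ → Fin _ → Fin _ → Prop := fun i x y => R (eι.symm i) (eV.symm x) (eV.symm y)
  refine ⟨_, _, A, d, fun v => ?_, ?_⟩
  · rw [← hdeg (eV.symm v)]
    exact Fintype.sum_equiv eι.symm _ _ fun i => relDegree_comap eV (R (eι.symm i)) v
  let e : M ≃ {F : Fin _ → Fin _ // ∀ i a b, A i a b → A i (F a) (F b)} :=
    (Equiv.ofInjective φ hφ).trans <| (Equiv.subtypeEquivRight fun F => (hrange F).symm).trans <|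
      (eV.arrowCongr eV).subtypeEquiv fun F => (preserves_comap_iff eV eι R F).symm
  have he (m : M) : (e m).1 = eV ∘ φ m ∘ eV.symm := rfl
  refine ⟨e, ?_, fun m m' => ?_⟩
  · rw [he, map_one]; exact funext eV.apply_symm_apply
  · rw [he, he, he, map_mul]; funext x
    exact congrArg (fun y => eV (φ m y)) (eV.symm_apply_apply _).symm

end RelSystem

open scoped Classical in
theorem Set.ncard_setOf_sum_option {X Y : Type*} [Finite X] [Finite Y] (p : X ⊕ Option Y → Prop) :
    {w | p w}.ncard =
      {x | p (.inl x)}.ncard + {y | p (.inr (some y))}.ncard + if p (.inr none) then 1 else 0 := by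
  have := Fintype.ofFinite X; have := Fintype.ofFinite Y
  simp only [Set.ncard_eq_toFinset_card', Set.toFinset_ofPred, Finset.card_filter,
    Fintype.sum_sum_type, Fintype.sum_option]
  split_ifs <;> omega

theorem Option.eq_id_or_eq_none_of_rel_lt {α : Type*} [LinearOrder α] [Finite α]
    {G : Option α → Option α}
    (hG : ∀ x y, Option.Rel (· < ·) x y → Option.Rel (· < ·) (G x) (G y)) :
    G = id ∨ G = fun _ => none := by
  have hleft : ∀ x, Option.Rel (α := α) (· < ·) x none → x = none := by
    rintro (_ | x) h
    · rfl
    · exact absurd h Option.not_rel_some_none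
  have hright : ∀ x, Option.Rel (β := α) (· < ·) none x → x = none := by
    rintro (_ | x) h
    · rfl
    · exact absurd h Option.not_rel_none_some
  have hnone : G none = none := by
    rcases h : G none with _ | i
    · rfl
    · have := hG none none .none
      rw [h, Option.rel_some_some] at this
      exact (lt_irrefl i this).elim
  by_cases h : ∃ i, G (some i) = none
  · right
    obtain ⟨i, hi⟩ := h
    funext x
    rcases x with _ | j
    · exact hnone
    rcases lt_trichotomy j i with hji | rfl | hij
    · exact hleft _ (hi ▸ hG _ _ (.some hji))
    · exact hi
    · exact hright _ (hi ▸ hG _ _ (.some hij))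
  · left
    simp only [not_exists] at h
    choose g hg using fun i => Option.ne_none_iff_exists'.1 (h i)
    have hmono : StrictMono g := fun i j hij => by
      simpa [hg] using hG _ _ (.some hij)
    funext x
    rcases x with _ | i
    · exact hnone
    · rw [hg, hmono.eq_id]; rfl

namespace DegreeRegular

open RelSystem Finset

section Cayley

variable {M : Type*} [Monoid M]

def rightMulRel (X : Type*) (m : M) : M ⊕ X → M ⊕ X → Prop :=
  Sum.LiftRel (fun a b => a * m = b) fun _ _ => False

theorem exists_mul_of_preserves_rightMulRel {X : Type*} {F : M ⊕ X → M ⊕ X}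
    (hF : Preserves (rightMulRel X) F) : ∃ c, ∀ a, F (.inl a) = .inl (c * a) := by
  obtain ⟨c, hc⟩ : ∃ c, F (.inl 1) = .inl c := by
    have := hF 1 (.inl 1) (.inl 1) (by simp [rightMulRel])
    rcases h : F (.inl 1) with c | x
    · exact ⟨c, rfl⟩
    · simp [h, rightMulRel] at this
  refine ⟨c, fun a => ?_⟩
  have := hF a (.inl 1) (.inl a) (by simp [rightMulRel])
  rcases h : F (.inl a) with b | x <;> simp_all [rightMulRel]

end Cayley

section Factorization

variable {M : Type*} [Monoid M]

noncomputable def factorCount (a : M) : ℕ := {p : M × M | p.1 * p.2 = a}.ncard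

theorem factorCount_unit_mul {u : M} (hu : IsUnit u) (a : M) :
    factorCount (u * a) = factorCount a := by
  let e : M × M ≃ M × M := hu.unit.mulLeft.prodCongr (Equiv.refl M)
  have : {p : M × M | p.1 * p.2 = a} = e ⁻¹' {p | p.1 * p.2 = u * a} := by
    ext p; simp [e, mul_assoc, hu.mul_right_inj]
  rw [factorCount, factorCount, this, Set.ncard_preimage_of_injective_subset_range e.injective
    (by simp)]

variable [Fintype M]

theorem factorCount_le (a : M) : factorCount a ≤ Fintype.card M ^ 2 := by
  simpa [factorCount, sq] using Set.ncard_le_card {p : M × M | p.1 * p.2 = a}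

theorem sum_ncard_mul_eq (a : M) : ∑ m, {b | b * m = a}.ncard = factorCount a := by
  classical
  simp only [factorCount, Set.ncard_eq_toFinset_card', Set.toFinset_ofPred, card_filter]
  rw [Fintype.sum_prod_type, Finset.sum_comm]

noncomputable def balance (a : M) : ℕ := Fintype.card M ^ 2 - factorCount a

theorem balance_unit_mul {u : M} (hu : IsUnit u) (a : M) : balance (u * a) = balance a := by
  rw [balance, balance, factorCount_unit_mul hu]

end Factorization

variable (M : Type) [Fintype M]

-- Large enough that `balance a ≤ maxTag M + 1`, and that the sink, of degree `≤ 2 |M| + 2`,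
-- stays below every tag, of degree `≥ maxTag M`.
def maxTag : ℕ := Fintype.card M ^ 2 + 2 * Fintype.card M + 2

-- `some i` is the `i`-th tag and `none` the sink.
abbrev Vertex := M ⊕ Option (Fin (maxTag M + 1))

def tagOrder : Vertex M → Vertex M → Prop := Sum.LiftRel (fun _ _ => False) (Option.Rel (· < ·))

theorem relDegree_tagOrder_tag (i : Fin (maxTag M + 1)) :
    relDegree (tagOrder M) (.inr (some i)) = maxTag M := by
  simp [relDegree, Set.ncard_setOf_sum_option, tagOrder, Set.ncard_eq_toFinset_card',
    Finset.filter_lt_eq_Ioi, Finset.filter_gt_eq_Iio]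
  omega

variable [Monoid M]

def balanceRel : Vertex M → Vertex M → Prop
  | .inl _, .inr none => True
  | .inl a, .inr (some i) => (i : ℕ) < balance a
  | _, _ => False

def unitRel : Vertex M → Vertex M → Prop
  | .inl a, .inr none => ¬IsUnit a
  | .inl a, .inr (some i) => IsUnit a ∨ i ≠ Fin.last _
  | _, _ => False

def baseSystem : M ⊕ Fin 3 → Vertex M → Vertex M → Prop :=
  Sum.elim (rightMulRel _) ![balanceRel M, unitRel M, tagOrder M]

open scoped Classical in
noncomputable def act : M →* Function.End (Vertex M) where
  toFun c := Sum.map (c * ·) fun x => if IsUnit c then x else none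
  map_one' := by
    funext v; rcases v with a | x <;> (simp; rfl)
  map_mul' c c' := by
    funext v; rcases v with a | x
    · simp [mul_assoc]; rfl
    · by_cases hc : IsUnit c <;> by_cases hc' : IsUnit c' <;> simp [hc, hc'] <;> rfl

theorem act_inl (c a : M) : act M c (.inl a) = .inl (c * a) := rfl

open scoped Classical in
theorem act_inr (c : M) (x : Option (Fin (maxTag M + 1))) :
    act M c (.inr x) = .inr (if IsUnit c then x else none) := rfl

theorem preserves_act (c : M) : Preserves (baseSystem M) (act M c) := by
  rintro (m | k) v w h
  · rcases v with a | x <;> rcases w with b | y <;>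
      simp_all [baseSystem, rightMulRel, act_inl, mul_assoc]
  fin_cases k <;>
    rcases v with a | _ | i <;> rcases w with b | _ | j <;> by_cases hc : IsUnit c <;>
    simp_all [baseSystem, balanceRel, unitRel, tagOrder, act_inl, act_inr, balance_unit_mul]

theorem mem_range_act_of_preserves {F : Vertex M → Vertex M} (hF : Preserves (baseSystem M) F) :
    F ∈ Set.range (act M) := by
  have hunit : ∀ v w, unitRel M v w → unitRel M (F v) (F w) := hF (.inr 1)
  have horder : ∀ v w, tagOrder M v w → tagOrder M (F v) (F w) := hF (.inr 2)
  obtain ⟨c, hc⟩ := exists_mul_of_preserves_rightMulRel fun m => hF (.inl m)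
  have hinr : ∀ x, ∃ y, F (.inr x) = .inr y := by
    intro x
    rcases x with _ | i
    · have := horder _ _ (Sum.LiftRel.inr Option.Rel.none)
      rcases h : F (.inr none) with a | y
      · simp [h, tagOrder] at this
      · exact ⟨y, rfl⟩
    · have := hunit (.inl 1) (.inr (some i)) (by simp [unitRel])
      rcases h : F (.inr (some i)) with a | y
      · simp [h, hc, unitRel] at this
      · exact ⟨y, rfl⟩
  choose G hG using hinr
  have hGorder : ∀ x y, Option.Rel (· < ·) x y → Option.Rel (· < ·) (G x) (G y) := fun x y h => by
    simpa [tagOrder, hG] using horder _ _ (Sum.LiftRel.inr h)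
  have hlast := hunit (.inl 1) (.inr (some (Fin.last _))) (by simp [unitRel])
  rw [hc, hG, mul_one] at hlast
  refine ⟨c, funext fun v => ?_⟩
  rcases v with a | x
  · rw [hc, act_inl]
  · rw [hG, act_inr]
    rcases Option.eq_id_or_eq_none_of_rel_lt hGorder with rfl | rfl <;> simp_all [unitRel]

theorem act_injective : Function.Injective (act M) := fun c c' h => by
  simpa [act_inl] using congrFun h (.inl 1)

def eltDegree : ℕ := Fintype.card M ^ 2 + Fintype.card M + maxTag M + 2

theorem totalDegree_baseSystem (v : Vertex M) :
    totalDegree (baseSystem M) v = ∑ m, relDegree (V := Vertex M) (rightMulRel _ m) v +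
      (relDegree (balanceRel M) v + relDegree (unitRel M) v + relDegree (tagOrder M) v) := by
  rw [baseSystem, totalDegree_sumElim, totalDegree, totalDegree, Fin.sum_univ_three]; rfl

theorem totalDegree_inl (a : M) : totalDegree (baseSystem M) (.inl a) = eltDegree M := by
  have hrm (m : M) :
      relDegree (V := Vertex M) (rightMulRel _ m) (.inl a) = 1 + {b | b * m = a}.ncard := by
    simp [relDegree, Set.ncard_setOf_sum_option, rightMulRel]
  have hbal : relDegree (balanceRel M) (.inl a) = balance a + 1 := by
    have : balance a ≤ maxTag M + 1 := by
      have := factorCount_le a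
      simp only [balance, maxTag]; omega
    simp [relDegree, Set.ncard_setOf_sum_option, balanceRel, Set.ncard_eq_toFinset_card',
      Fin.card_filter_val_lt, this]
  have hunit : relDegree (unitRel M) (.inl a) = maxTag M + 1 := by
    by_cases h : IsUnit a <;>
      simp [relDegree, Set.ncard_setOf_sum_option, unitRel, h, Set.ncard_eq_toFinset_card',
        Finset.filter_ne']
  have hord : relDegree (tagOrder M) (.inl a) = 0 := by
    simp [relDegree, Set.ncard_setOf_sum_option, tagOrder]
  rw [totalDegree_baseSystem, hbal, hunit, hord, Finset.sum_congr rfl fun m _ => hrm m,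
    sum_add_distrib, sum_ncard_mul_eq]
  have := factorCount_le a
  simp only [sum_const, card_univ, smul_eq_mul, mul_one, eltDegree, balance]
  omega

theorem relDegree_rightMulRel_inr (m : M) (x : Option (Fin (maxTag M + 1))) :
    relDegree (V := Vertex M) (rightMulRel _ m) (.inr x) = 0 := by
  simp [relDegree, Set.ncard_setOf_sum_option, rightMulRel]

theorem maxTag_le_totalDegree_tag (i : Fin (maxTag M + 1)) :
    maxTag M ≤ totalDegree (baseSystem M) (.inr (some i)) := by
  rw [totalDegree_baseSystem, relDegree_tagOrder_tag]
  omega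

theorem totalDegree_tag_le (i : Fin (maxTag M + 1)) :
    totalDegree (baseSystem M) (.inr (some i)) ≤ maxTag M + 2 * Fintype.card M := by
  rw [totalDegree_baseSystem, relDegree_tagOrder_tag]
  simp only [relDegree_rightMulRel_inr, sum_const_zero, zero_add]
  simp [relDegree, Set.ncard_setOf_sum_option, balanceRel, unitRel]
  have h1 := Set.ncard_le_card {x : M | (i : ℕ) < balance x}
  have h2 := Set.ncard_le_card {x : M | IsUnit x ∨ ¬i = Fin.last _}
  simp only [Nat.card_eq_fintype_card] at h1 h2
  omega

theorem totalDegree_sink_le :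
    totalDegree (baseSystem M) (.inr none) ≤ 2 * Fintype.card M + 2 := by
  rw [totalDegree_baseSystem]
  simp only [relDegree_rightMulRel_inr, sum_const_zero, zero_add]
  simp [relDegree, Set.ncard_setOf_sum_option, balanceRel, unitRel, tagOrder]
  have h := Set.ncard_le_card {x : M | ¬IsUnit x}
  simp only [Nat.card_eq_fintype_card] at h
  omega

theorem totalDegree_baseSystem_le (v : Vertex M) : totalDegree (baseSystem M) v ≤ eltDegree M := by
  have : Fintype.card M ≤ Fintype.card M ^ 2 := Nat.le_self_pow two_ne_zero _
  rcases v with a | _ | i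
  · exact (totalDegree_inl M a).le
  · have := totalDegree_sink_le M
    simp only [eltDegree, maxTag] at this ⊢; omega
  · have := totalDegree_tag_le M i
    simp only [eltDegree] at this ⊢; omega

theorem totalDegree_sink_le_tag (i : Fin (maxTag M + 1)) :
    totalDegree (baseSystem M) (.inr none) ≤ totalDegree (baseSystem M) (.inr (some i)) := by
  have := totalDegree_sink_le M
  have := maxTag_le_totalDegree_tag M i
  simp only [maxTag] at *; omega

theorem preserves_regularize_iff_mem_range {F : Vertex M → Vertex M} :
    Preserves (regularize (baseSystem M) (eltDegree M)) F ↔ F ∈ Set.range (act M) := by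
  rw [preserves_regularize_iff]
  refine ⟨fun h => mem_range_act_of_preserves M h.1, ?_⟩
  rintro ⟨c, rfl⟩
  refine ⟨preserves_act M c, fun v => ?_⟩
  rcases v with a | x
  · simp [totalDegree_inl]
  rw [act_inr]
  split_ifs
  · exact le_rfl
  rcases x with _ | i
  · exact le_rfl
  · have := totalDegree_sink_le_tag M i; omega

end DegreeRegular

/-- Every finite monoid is isomorphic to the endomorphism monoid of a finite binary
relational system in which every vertex has the same total degree. -/
theorem monoid_is_end_of_degree_regular_system (M : Type) [Monoid M] [Finite M] :
    ∃ (n k : ℕ) (A : Fin k → Fin n → Fin n → Prop) (d : ℕ),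
      (∀ v : Fin n,
        (∑ i : Fin k, ({w | A i v w}.ncard + {w | A i w v}.ncard)) = d) ∧
      ∃ e : M ≃ {F : Fin n → Fin n // ∀ i a b, A i a b → A i (F a) (F b)},
        (e 1).1 = id ∧ ∀ m m' : M, (e (m * m')).1 = (e m).1 ∘ (e m').1 := by
  have := Fintype.ofFinite M
  exact RelSystem.exists_fin_system_of_range_eq _ _
    (RelSystem.totalDegree_regularize (DegreeRegular.totalDegree_baseSystem_le M))
    (DegreeRegular.act M) (DegreeRegular.act_injective M)
    fun _ => DegreeRegular.preserves_regularize_iff_mem_range M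
end

section
/- Let D be a digraph, S a graph indicator, and D * S the šíp product. Every odd cycle of D * S has length at least min{oddgirth(S), 2 + odddist(in S, out S)}, where odddist(in S, out S) is the minimum odd length of a path in S between in S and out S. -/
/-
A cycle of `D * S` that avoids the vertices of `D` lies in a single copy of `S`, so it is an odd
cycle of `S`. Otherwise, started at a vertex of `D`, it splits into segments `x, q, y` between
consecutive vertices `x, y` of `D`, where `q` is a path in a copy of `S` joining two vertices of
`{in S, out S}`; the segment has length `|q| + 2`. The total length being odd, some `q` is odd,
and an odd path has distinct ends, so `q` is an odd `in S`–`out S` path.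
-/

/-- The šíp product `D * S`. -/
def sipProduct {U T : Type} (r : U → U → Prop) (S : SimpleGraph T) (vin vout : T) :
    SimpleGraph (U ⊕ ({a : U × U // r a.1 a.2} × T)) where
  Adj p q :=
    match p, q with
    | Sum.inl _, Sum.inl _ => False
    | Sum.inl x, Sum.inr (a, t) => (a.1.1 = x ∧ t = vin) ∨ (a.1.2 = x ∧ t = vout)
    | Sum.inr (a, t), Sum.inl x => (a.1.1 = x ∧ t = vin) ∨ (a.1.2 = x ∧ t = vout)
    | Sum.inr (a, t), Sum.inr (a', t') => a = a' ∧ S.Adj t t'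
  symm := ⟨by
    rintro (x | ⟨a, t⟩) (y | ⟨b, s⟩) h
    · exact h.elim
    · exact h
    · exact h
    · exact ⟨h.1.symm, h.2.symm⟩⟩
  loopless := ⟨by
    rintro (x | ⟨a, t⟩) h
    · exact h
    · exact S.irrefl h.2⟩

open SimpleGraph Walk

theorem SimpleGraph.Walk.IsPath.exists_isPath_length_eq {V : Type} {G : SimpleGraph V}
    {a b u v : V} {q : G.Walk u v} (hq : q.IsPath) (hlen : q.length ≠ 0)
    (hu : u = a ∨ u = b) (hv : v = a ∨ v = b) :
    ∃ p : G.Walk a b, p.IsPath ∧ p.length = q.length := by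
  have hne : u ≠ v := by
    rintro rfl
    exact hlen (isPath_iff_nil.mp hq).length_eq_zero
  rcases hu with rfl | rfl <;> rcases hv with rfl | rfl
  · exact absurd rfl hne
  · exact ⟨q, hq, rfl⟩
  · exact ⟨q.reverse, hq.reverse, q.length_reverse⟩
  · exact absurd rfl hne

namespace sipProduct

variable {U T : Type} {r : U → U → Prop} {S : SimpleGraph T} {vin vout : T}

def copyHom (a : {p : U × U // r p.1 p.2}) : S →g sipProduct r S vin vout where
  toFun t := Sum.inr (a, t)
  map_rel' h := ⟨rfl, h⟩

theorem copyHom_apply (a : {p : U × U // r p.1 p.2}) (t : T) :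
    copyHom (S := S) (vin := vin) (vout := vout) a t = Sum.inr (a, t) :=
  rfl

theorem copyHom_injective (a : {p : U × U // r p.1 p.2}) :
    Function.Injective (copyHom (S := S) (vin := vin) (vout := vout) a) :=
  fun _ _ h => (Prod.ext_iff.mp (Sum.inr_injective h)).2

-- Endpoints are written `Sum.inr (a, t)` rather than `copyHom a t`, so that copied walks
-- compose with walks of `sipProduct` without casts.
def copyWalk (a : {p : U × U // r p.1 p.2}) {t s : T} (q : S.Walk t s) :
    (sipProduct r S vin vout).Walk (Sum.inr (a, t)) (Sum.inr (a, s)) :=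
  (q.map (copyHom a)).copy (copyHom_apply a t) (copyHom_apply a s)

theorem copyWalk_cons (a : {p : U × U // r p.1 p.2}) {t t' s : T} (h : S.Adj t t')
    (q : S.Walk t' s) :
    copyWalk (vin := vin) (vout := vout) a (cons h q) =
      cons (show (sipProduct r S vin vout).Adj (Sum.inr (a, t)) (Sum.inr (a, t')) from ⟨rfl, h⟩)
        (copyWalk a q) :=
  rfl

@[simp]
theorem length_copyWalk (a : {p : U × U // r p.1 p.2}) {t s : T} (q : S.Walk t s) :
    (copyWalk (vin := vin) (vout := vout) a q).length = q.length := by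
  rw [copyWalk, length_copy, length_map]

@[simp]
theorem isPath_copyWalk {a : {p : U × U // r p.1 p.2}} {t s : T} {q : S.Walk t s} :
    (copyWalk (vin := vin) (vout := vout) a q).IsPath ↔ q.IsPath := by
  rw [copyWalk, isPath_copy, isPath_map_iff_of_injective (copyHom_injective a)]

@[simp]
theorem isCycle_copyWalk {a : {p : U × U // r p.1 p.2}} {t : T} {q : S.Walk t t} :
    (copyWalk (vin := vin) (vout := vout) a q).IsCycle ↔ q.IsCycle := by
  rw [copyWalk, isCycle_copy, isCycle_map_iff_of_injective (copyHom_injective a)]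

theorem exists_eq_copyWalk_of_forall_inl_notMem {v w : U ⊕ ({p : U × U // r p.1 p.2} × T)}
    (p : (sipProduct r S vin vout).Walk v w) (hp : ∀ x : U, Sum.inl x ∉ p.support)
    {a t} (hv : v = Sum.inr (a, t)) :
    ∃ (s : T) (q : S.Walk t s) (hw : w = Sum.inr (a, s)), p.copy hv hw = copyWalk a q := by
  induction p generalizing a t with
  | nil =>
    subst hv
    exact ⟨t, nil, rfl, rfl⟩
  | @cons _ u _ h p ih =>
    subst hv
    rcases u with x | ⟨a', t'⟩
    · exact absurd (List.mem_cons_of_mem _ p.start_mem_support) (hp x)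
    · obtain ⟨rfl, hadj⟩ := h
      obtain ⟨s, q, rfl, hq⟩ := ih (fun x hx => hp x (List.mem_cons_of_mem _ hx)) rfl
      refine ⟨s, cons hadj q, rfl, ?_⟩
      rw [copy_rfl_rfl] at hq ⊢
      rw [copyWalk_cons, hq]

theorem exists_isCycle_length_eq_of_forall_inl_notMem {v : U ⊕ ({p : U × U // r p.1 p.2} × T)}
    {c : (sipProduct r S vin vout).Walk v v} (hc : c.IsCycle)
    (hinl : ∀ x : U, Sum.inl x ∉ c.support) :
    ∃ (t : T) (q : S.Walk t t), q.IsCycle ∧ q.length = c.length := by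
  rcases v with x | ⟨a, t⟩
  · exact absurd c.start_mem_support (hinl x)
  obtain ⟨s, q, hs, hq⟩ := exists_eq_copyWalk_of_forall_inl_notMem c hinl rfl
  obtain rfl : t = s := by simpa using hs
  rw [copy_rfl_rfl] at hq
  subst hq
  exact ⟨t, q, isCycle_copyWalk.mp hc, (length_copyWalk a q).symm⟩

theorem exists_eq_copyWalk_append_cons {v w : U ⊕ ({p : U × U // r p.1 p.2} × T)}
    (p : (sipProduct r S vin vout).Walk v w) {a t} {y : U}
    (hv : v = Sum.inr (a, t)) (hw : w = Sum.inl y) :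
    ∃ (t' : T) (z : U) (q : S.Walk t t')
      (h : (sipProduct r S vin vout).Adj (Sum.inr (a, t')) (Sum.inl z))
      (rest : (sipProduct r S vin vout).Walk (Sum.inl z) (Sum.inl y)),
      p.copy hv hw = (copyWalk a q).append (cons h rest) := by
  induction p generalizing a t with
  | nil => exact absurd (hv.symm.trans hw) Sum.inr_ne_inl
  | @cons _ u _ h p ih =>
    subst hv hw
    rcases u with z | ⟨a', t'⟩
    · exact ⟨t, z, nil, h, p, rfl⟩
    · obtain ⟨rfl, hadj⟩ := h
      obtain ⟨t'', z, q, h', rest, hq⟩ := ih rfl rfl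
      refine ⟨t'', z, cons hadj q, h', rest, ?_⟩
      rw [copy_rfl_rfl] at hq ⊢
      rw [copyWalk_cons, cons_append, hq]

theorem exists_odd_isPath_of_odd_walk {z y : U}
    (w : (sipProduct r S vin vout).Walk (Sum.inl z) (Sum.inl y))
    (hw : w.support.tail.Nodup) (hodd : Odd w.length) :
    ∃ p : S.Walk vin vout, p.IsPath ∧ Odd p.length ∧ p.length + 2 ≤ w.length := by
  match w, hw, hodd with
  | nil, _, hodd => exact absurd hodd Nat.not_odd_zero
  | cons (v := Sum.inl _) h _, _, _ => exact h.elim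
  | cons (v := Sum.inr (a, t)) h w, hw, hodd =>
    obtain ⟨t', z', q, h', rest, hsplit⟩ := exists_eq_copyWalk_append_cons w rfl rfl
    rw [copy_rfl_rfl] at hsplit
    have hpath : ((copyWalk a q).append (cons h' rest)).IsPath := hsplit ▸ IsPath.mk' hw
    have hlen : (cons h w).length = q.length + rest.length + 2 := by
      rw [length_cons, hsplit, length_append, length_copyWalk, length_cons]; omega
    rcases Nat.even_or_odd q.length with hq | hq
    · have hrest : Odd rest.length := by grind
      obtain ⟨p, hp, hpodd, hple⟩ := exists_odd_isPath_of_odd_walk rest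
        hpath.of_append_right.of_cons.support_nodup.tail hrest
      exact ⟨p, hp, hpodd, by omega⟩
    · obtain ⟨p, hp, hplen⟩ := (isPath_copyWalk.mp hpath.of_append_left).exists_isPath_length_eq
        hq.pos.ne' (h.imp And.right And.right) (h'.imp And.right And.right)
      exact ⟨p, hp, hplen ▸ hq, by omega⟩
termination_by w.length

end sipProduct

theorem sipProduct_odd_cycle_length_general {U T : Type} (r : U → U → Prop)
    (S : SimpleGraph T) (vin vout : T) :
    ∀ (v) (w : (sipProduct r S vin vout).Walk v v), w.IsCycle → Odd w.length →
      min (sInf {n : ℕ | Odd n ∧ ∃ (t : T) (c : S.Walk t t), c.IsCycle ∧ c.length = n})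
          (2 + sInf {n : ℕ | Odd n ∧ ∃ p : S.Walk vin vout, p.IsPath ∧ p.length = n})
        ≤ w.length := by
  intro v w hc hodd
  classical
  by_cases hinl : ∃ x : U, Sum.inl x ∈ w.support
  · obtain ⟨x, hx⟩ := hinl
    obtain ⟨p, hp, hpodd, hle⟩ := sipProduct.exists_odd_isPath_of_odd_walk (w.rotate _ hx)
      (hc.rotate hx).support_nodup (by rwa [length_rotate])
    calc _ ≤ 2 + sInf {n : ℕ | Odd n ∧ ∃ p : S.Walk vin vout, p.IsPath ∧ p.length = n} :=
          min_le_right _ _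
      _ ≤ 2 + p.length := by gcongr; exact Nat.sInf_le ⟨hpodd, p, hp, rfl⟩
      _ ≤ w.length := by rwa [length_rotate, add_comm] at hle
  · simp only [not_exists] at hinl
    obtain ⟨t, q, hq, hlen⟩ := sipProduct.exists_isCycle_length_eq_of_forall_inl_notMem hc hinl
    calc _ ≤ sInf {n : ℕ | Odd n ∧ ∃ (t : T) (c : S.Walk t t), c.IsCycle ∧ c.length = n} :=
          min_le_left _ _
      _ ≤ w.length := Nat.sInf_le ⟨hodd, t, q, hq, hlen⟩

/-- Every odd cycle of the šíp product `D * S` has length at least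
`min (oddgirth S) (2 + odddist(in S, out S))`, where `odddist` is the minimum odd
length of a path in `S` between `in S` and `out S`. -/
theorem sipProduct_odd_cycle_length {U T : Type} (r : U → U → Prop)
    (S : SimpleGraph T) (vin vout : T) (hio : vin ≠ vout) :
    ∀ (v) (w : (sipProduct r S vin vout).Walk v v), w.IsCycle → Odd w.length →
      min (sInf {n : ℕ | Odd n ∧ ∃ (t : T) (c : S.Walk t t), c.IsCycle ∧ c.length = n})
          (2 + sInf {n : ℕ | Odd n ∧ ∃ p : S.Walk vin vout, p.IsPath ∧ p.length = n})
        ≤ w.length :=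
  sipProduct_odd_cycle_length_general r S vin vout
end
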